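/- Let R be Hermitian positive semidefinite with R ⪯ λI for some λ > 0, and Q ∈ ℂ^{N×K}. The function W ↦ tr(WᴴRW) - 2·Re(tr(WᴴQ)) is majorized at W₀ by W ↦ λ‖W - Π‖_F² + c, where Π = (Q - (R - λI)W₀)/λ and c is a constant independent of W; moreover the minimizer of ‖W - Π‖_F² over {W : ‖W‖_F² ≤ P} is Π if ‖Π‖_F² ≤ P and √(P/‖Π‖_F²)·Π otherwise. -/

import Mathlib

open Matrix
open scoped ComplexOrder

/-!
With `A = λ•1 - R ⪰ 0`, expanding the squares shows that `λ‖W - Π‖_F² + c` minus the objective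
is `tr((W - W₀)ᴴ A (W - W₀)) ≥ 0`, which vanishes at `W₀`. For the projection, if
`‖W‖ ≤ √P ≤ ‖Π‖` then `‖(√P/‖Π‖)•Π - Π‖ = ‖Π‖ - √P ≤ ‖Π‖ - ‖W‖ ≤ ‖W - Π‖` by the reverse
triangle inequality, in any real normed space; the Frobenius norm is `‖X‖² = Re tr(XᴴX)`.
-/

theorem norm_div_norm_smul_sub_self_le {E : Type*} [NormedAddCommGroup E] [NormedSpace ℝ E]
    {p w : E} {r : ℝ} (hw : ‖w‖ ≤ r) (hrp : r ≤ ‖p‖) :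
    ‖(r / ‖p‖) • p - p‖ ≤ ‖w - p‖ := by
  rcases (norm_nonneg p).eq_or_lt with hp | hp
  · simp [norm_eq_zero.mp hp.symm]
  calc ‖(r / ‖p‖) • p - p‖ = ‖(1 - r / ‖p‖) • p‖ := by rw [← norm_neg, neg_sub, sub_smul, one_smul]
    _ = ‖p‖ - r := by
        rw [norm_smul, Real.norm_eq_abs, abs_of_nonneg, sub_mul, div_mul_cancel₀ _ hp.ne', one_mul]
        rw [sub_nonneg, div_le_one hp]; exact hrp
    _ ≤ ‖p‖ - ‖w‖ := by linarith
    _ ≤ ‖w - p‖ := by rw [norm_sub_rev]; exact norm_sub_norm_le p w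

section Trace

variable {m n : Type*} [Fintype m] [Fintype n]

theorem re_trace_conjTranspose_mul_comm (X Y : Matrix m n ℂ) :
    (trace (Yᴴ * X)).re = (trace (Xᴴ * Y)).re := by
  rw [← conjTranspose_conjTranspose X, ← conjTranspose_mul, trace_conjTranspose,
    conjTranspose_conjTranspose, Complex.star_def, Complex.conj_re]

theorem Matrix.IsHermitian.re_trace_conjTranspose_mul_mul_comm {B : Matrix m m ℂ}
    (hB : B.IsHermitian) (X Y : Matrix m n ℂ) :
    (trace (Yᴴ * B * X)).re = (trace (Xᴴ * B * Y)).re := by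
  rw [Matrix.mul_assoc, re_trace_conjTranspose_mul_comm, conjTranspose_mul, hB.eq]

theorem re_trace_majorant_sub [DecidableEq m] {R : Matrix m m ℂ} (hR : R.IsHermitian) {lam : ℝ}
    {Q W₀ Pi : Matrix m n ℂ} (hPi : (lam : ℂ) • Pi = Q - (R - (lam : ℂ) • 1) * W₀)
    (W : Matrix m n ℂ) :
    lam * (trace ((W - Pi)ᴴ * (W - Pi))).re
        - ((trace (Wᴴ * R * W)).re - 2 * (trace (Wᴴ * Q)).re) =
      (trace ((W - W₀)ᴴ * ((lam : ℂ) • 1 - R) * (W - W₀))).re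
        + (lam * (trace (Piᴴ * Pi)).re - (trace (W₀ᴴ * ((lam : ℂ) • 1 - R) * W₀)).re) := by
  have hPi_re := congrArg (fun X => (trace (Wᴴ * X)).re) hPi
  have hPiW := re_trace_conjTranspose_mul_comm W Pi
  have hW₀W := re_trace_conjTranspose_mul_comm W W₀
  have hW₀RW := hR.re_trace_conjTranspose_mul_mul_comm W W₀
  simp only [conjTranspose_sub, Matrix.sub_mul, Matrix.mul_sub, Matrix.mul_smul, Matrix.smul_mul,
    Matrix.one_mul, Matrix.mul_one, trace_sub, trace_smul, Complex.sub_re, smul_eq_mul,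
    Complex.re_ofReal_mul, Matrix.mul_assoc] at hPi_re hW₀RW ⊢
  rw [hPiW, hW₀W, hW₀RW]
  linarith

section Frobenius

attribute [local instance] Matrix.frobeniusNormedAddCommGroup Matrix.frobeniusNormedSpace

theorem re_trace_conjTranspose_mul_self (A : Matrix m n ℂ) :
    (trace (Aᴴ * A)).re = ‖A‖ ^ 2 := by
  rw [frobenius_norm_def, ← Real.rpow_natCast, ← Real.rpow_mul (by positivity)]
  norm_num
  simp only [trace, diag_apply, mul_apply, conjTranspose_apply, Complex.re_sum, Complex.star_def,
    Complex.conj_mul']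
  rw [Finset.sum_comm]
  norm_cast

theorem re_trace_sqrt_div_smul_sub_le {Pi W : Matrix m n ℂ} {P : ℝ}
    (hW : (trace (Wᴴ * W)).re ≤ P) (hP : P ≤ (trace (Piᴴ * Pi)).re) :
    (trace (((√(P / (trace (Piᴴ * Pi)).re) : ℂ) • Pi - Pi)ᴴ *
        ((√(P / (trace (Piᴴ * Pi)).re) : ℂ) • Pi - Pi))).re ≤
      (trace ((W - Pi)ᴴ * (W - Pi))).re := by
  simp only [re_trace_conjTranspose_mul_self] at *
  rw [Real.sqrt_div' _ (sq_nonneg _), Real.sqrt_sq (norm_nonneg _), Complex.coe_smul]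
  gcongr
  exact norm_div_norm_smul_sub_self_le (Real.le_sqrt_of_sq_le hW)
    (Real.sqrt_le_left (norm_nonneg _) |>.mpr hP)

end Frobenius

end Trace

theorem stmt_13_general {N K : ℕ} (R : Matrix (Fin N) (Fin N) ℂ) (hR : R.PosSemidef)
    (lam : ℝ) (hlam : 0 < lam)
    (hRlam : ((lam : ℂ) • (1 : Matrix (Fin N) (Fin N) ℂ) - R).PosSemidef)
    (Q W₀ : Matrix (Fin N) (Fin K) ℂ) (P : ℝ) :
    ∃ c : ℝ,
      (∀ W : Matrix (Fin N) (Fin K) ℂ,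
        (Matrix.trace (Wᴴ * R * W)).re - 2 * (Matrix.trace (Wᴴ * Q)).re ≤
          lam * (Matrix.trace
            ((W - (lam : ℂ)⁻¹ • (Q - (R - (lam : ℂ) • 1) * W₀))ᴴ *
              (W - (lam : ℂ)⁻¹ • (Q - (R - (lam : ℂ) • 1) * W₀)))).re + c) ∧
      ((Matrix.trace (W₀ᴴ * R * W₀)).re - 2 * (Matrix.trace (W₀ᴴ * Q)).re =
        lam * (Matrix.trace
          ((W₀ - (lam : ℂ)⁻¹ • (Q - (R - (lam : ℂ) • 1) * W₀))ᴴ *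
            (W₀ - (lam : ℂ)⁻¹ • (Q - (R - (lam : ℂ) • 1) * W₀)))).re + c) ∧
      (∀ Pi0 : Matrix (Fin N) (Fin K) ℂ,
        Pi0 = (lam : ℂ)⁻¹ • (Q - (R - (lam : ℂ) • 1) * W₀) →
        ((Matrix.trace (Pi0ᴴ * Pi0)).re ≤ P →
          ∀ W : Matrix (Fin N) (Fin K) ℂ, (Matrix.trace (Wᴴ * W)).re ≤ P →
            (Matrix.trace ((Pi0 - Pi0)ᴴ * (Pi0 - Pi0))).re ≤
              (Matrix.trace ((W - Pi0)ᴴ * (W - Pi0))).re) ∧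
        (P < (Matrix.trace (Pi0ᴴ * Pi0)).re →
          ∀ W : Matrix (Fin N) (Fin K) ℂ, (Matrix.trace (Wᴴ * W)).re ≤ P →
            (Matrix.trace
              ((((Real.sqrt (P / (Matrix.trace (Pi0ᴴ * Pi0)).re) : ℂ) • Pi0 - Pi0)ᴴ *
                ((Real.sqrt (P / (Matrix.trace (Pi0ᴴ * Pi0)).re) : ℂ) • Pi0 - Pi0)))).re ≤
              (Matrix.trace ((W - Pi0)ᴴ * (W - Pi0))).re)) := by
  set Pi := (lam : ℂ)⁻¹ • (Q - (R - (lam : ℂ) • 1) * W₀)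
  have hPi : (lam : ℂ) • Pi = Q - (R - (lam : ℂ) • 1) * W₀ := by
    rw [smul_smul, mul_inv_cancel₀ (by exact_mod_cast hlam.ne'), one_smul]
  refine ⟨(trace (W₀ᴴ * ((lam : ℂ) • 1 - R) * W₀)).re - lam * (trace (Piᴴ * Pi)).re,
    fun W => ?_, ?_, fun Pi0 _ => ⟨fun _ W _ => ?_, fun hPi0 W hW => ?_⟩⟩
  · have hgap := re_trace_majorant_sub hR.isHermitian hPi W
    have hpsd := (Complex.nonneg_iff.mp
      (hRlam.conjTranspose_mul_mul_same (W - W₀)).trace_nonneg).1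
    linarith
  · have hgap := re_trace_majorant_sub hR.isHermitian hPi W₀
    simp only [sub_self, conjTranspose_zero, Matrix.zero_mul, trace_zero, Complex.zero_re] at hgap
    linarith
  · simpa only [sub_self, conjTranspose_zero, Matrix.zero_mul, trace_zero, Complex.zero_re]
      using (Complex.nonneg_iff.mp (posSemidef_conjTranspose_mul_self (W - Pi0)).trace_nonneg).1
  · exact re_trace_sqrt_div_smul_sub_le hW hPi0.le

/-- Further majorization of the quadratic beamforming objective by
`λ‖W - Pi0‖_F² + c` with `Pi0 = (Q - (R - λI)W₀)/λ`, tight at `W₀`; and the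
minimizer of `‖W - Pi0‖_F²` over the Frobenius ball is the projection of `Pi0`. -/
theorem stmt_13 {N K : ℕ} (R : Matrix (Fin N) (Fin N) ℂ) (hR : R.PosSemidef)
    (lam : ℝ) (hlam : 0 < lam)
    (hRlam : ((lam : ℂ) • (1 : Matrix (Fin N) (Fin N) ℂ) - R).PosSemidef)
    (Q W₀ : Matrix (Fin N) (Fin K) ℂ) (P : ℝ) (hP : 0 < P) :
    ∃ c : ℝ,
      (∀ W : Matrix (Fin N) (Fin K) ℂ,
        (Matrix.trace (Wᴴ * R * W)).re - 2 * (Matrix.trace (Wᴴ * Q)).re ≤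
          lam * (Matrix.trace
            ((W - (lam : ℂ)⁻¹ • (Q - (R - (lam : ℂ) • 1) * W₀))ᴴ *
              (W - (lam : ℂ)⁻¹ • (Q - (R - (lam : ℂ) • 1) * W₀)))).re + c) ∧
      ((Matrix.trace (W₀ᴴ * R * W₀)).re - 2 * (Matrix.trace (W₀ᴴ * Q)).re =
        lam * (Matrix.trace
          ((W₀ - (lam : ℂ)⁻¹ • (Q - (R - (lam : ℂ) • 1) * W₀))ᴴ *
            (W₀ - (lam : ℂ)⁻¹ • (Q - (R - (lam : ℂ) • 1) * W₀)))).re + c) ∧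
      (∀ Pi0 : Matrix (Fin N) (Fin K) ℂ,
        Pi0 = (lam : ℂ)⁻¹ • (Q - (R - (lam : ℂ) • 1) * W₀) →
        ((Matrix.trace (Pi0ᴴ * Pi0)).re ≤ P →
          ∀ W : Matrix (Fin N) (Fin K) ℂ, (Matrix.trace (Wᴴ * W)).re ≤ P →
            (Matrix.trace ((Pi0 - Pi0)ᴴ * (Pi0 - Pi0))).re ≤
              (Matrix.trace ((W - Pi0)ᴴ * (W - Pi0))).re) ∧
        (P < (Matrix.trace (Pi0ᴴ * Pi0)).re →
          ∀ W : Matrix (Fin N) (Fin K) ℂ, (Matrix.trace (Wᴴ * W)).re ≤ P →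
            (Matrix.trace
              ((((Real.sqrt (P / (Matrix.trace (Pi0ᴴ * Pi0)).re) : ℂ) • Pi0 - Pi0)ᴴ *
                ((Real.sqrt (P / (Matrix.trace (Pi0ᴴ * Pi0)).re) : ℂ) • Pi0 - Pi0)))).re ≤
              (Matrix.trace ((W - Pi0)ᴴ * (W - Pi0))).re)) :=
  stmt_13_general R hR lam hlam hRlam Q W₀ P
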